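/- Let V be the vertex set of a median graph, and fix x₀, x ∈ V and an integer n ≥ 1 with d_nor(x₀,x) ≥ n; let v, H_n and F_h be as defined. Let h ∈ H_n, suppose F_h is nonempty, and let x_h ∈ F_h be a point at which d(x₀,·) attains its minimum over F_h. Then F_h = [x_h, v]. -/

import Mathlib

open scoped ENNReal

namespace MedianGraph

variable {V : Type*}

/-- The metric interval `[x,y]` in a graph with respect to the edge-path metric. -/
def itv (G : SimpleGraph V) (x y : V) : Set V :=
  {z | G.dist x z + G.dist z y = G.dist x y}

/-- A subset of the vertex set is convex if it contains every interval between
two of its points. -/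
def Cvx (G : SimpleGraph V) (S : Set V) : Prop :=
  ∀ a ∈ S, ∀ b ∈ S, itv G a b ⊆ S

/-- A median graph: a connected graph in which every triple of vertices has a
unique median. -/
def IsMedianGraph (G : SimpleGraph V) : Prop :=
  G.Connected ∧ ∀ x y z : V, ∃! m : V,
    m ∈ itv G x y ∧ m ∈ itv G y z ∧ m ∈ itv G z x

/-- A halfspace: a subset which is nonempty, proper, convex with convex complement. -/
def IsHalfspace (G : SimpleGraph V) (h : Set V) : Prop :=
  h.Nonempty ∧ hᶜ.Nonempty ∧ Cvx G h ∧ Cvx G hᶜ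

/-- `Hset G x y` is the set of halfspaces containing `x` but not `y`. -/
def Hset (G : SimpleGraph V) (x y : V) : Set (Set V) :=
  {h | IsHalfspace G h ∧ x ∈ h ∧ y ∉ h}

/-- The normal distance `d_nor(x,y)`: the maximum cardinality of a chain (under
inclusion) in `Hset G x y`. -/
noncomputable def dnor (G : SimpleGraph V) (x y : V) : ℕ :=
  sSup {n : ℕ | ∃ c : Set (Set V), c ⊆ Hset G x y ∧ IsChain (· ⊆ ·) c ∧ c.encard = n}

/-- Two halfspaces cross if all four intersections of them and their
complements are nonempty. -/
def Crosses (h k : Set V) : Prop :=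
  (h ∩ k).Nonempty ∧ (h ∩ kᶜ).Nonempty ∧ (hᶜ ∩ k).Nonempty ∧ (hᶜ ∩ kᶜ).Nonempty

/-- `Hn G x₀ x n`: the halfspaces `h` in `Hset G x₀ x` such that the maximum
cardinality of a chain in `{k ∈ H(x₀,x) : k ⊆ h}` equals `n`. -/
noncomputable def Hn (G : SimpleGraph V) (x₀ x : V) (n : ℕ) : Set (Set V) :=
  {h | h ∈ Hset G x₀ x ∧
    sSup {m : ℕ | ∃ c : Set (Set V), c ⊆ {k | k ∈ Hset G x₀ x ∧ k ⊆ h} ∧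
      IsChain (· ⊆ ·) c ∧ c.encard = m} = n}

/-- `Fh G x₀ x n h = {w ∈ [x₀,x] ∩ S_nor(x₀,n) : w ∉ h}`. -/
def Fh (G : SimpleGraph V) (x₀ x : V) (n : ℕ) (h : Set V) : Set V :=
  {w | w ∈ itv G x₀ x ∧ dnor G x₀ w = n ∧ w ∉ h}

/-- The graph has dimension at most `η` if every family of pairwise crossing
halfspaces has cardinality at most `η`. -/
def DimLE (G : SimpleGraph V) (η : ℕ) : Prop :=
  ∀ F : Set (Set V), (∀ h ∈ F, IsHalfspace G h) →
    (∀ h ∈ F, ∀ k ∈ F, h ≠ k → Crosses h k) → F.encard ≤ η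

end MedianGraph

open MedianGraph

/-!
Normal balls around `x₀` are convex: a chain of halfspaces separating `x₀` from a point of
`[u, w]` separates `x₀` from `u` or from `w`. Taking the median of `w`, `v`, `x`, this makes
`v` a gate: every point of `[x₀, x]` in the normal ball `B_nor(x₀, n)` lies in `[x₀, v]`. A
chain of `n` halfspaces below `h` shows that the points outside `h` have normal distance at
least `n`, so `F_h = [x₀, v] \ h`, the trace on `[x₀, v]` of a convex set containing `v`.
Taking the median of `x₀`, `x_h` and a point `w` of this set shows `x_h ∈ [x₀, w]`, whence
`F_h = [x_h, v]`.
-/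

namespace MedianGraph

variable {V : Type*} {G : SimpleGraph V}

theorem itv_comm (a b : V) : itv G a b = itv G b a := by
  ext z
  simp only [itv, Set.mem_ofPred_eq, SimpleGraph.dist_comm (G := G) (u := a),
    SimpleGraph.dist_comm (G := G) (v := b)]
  omega

theorem itv_subset_itv_left (hG : G.Connected) {a b c : V} (hb : b ∈ itv G a c) :
    itv G a b ⊆ itv G a c := by
  intro z hz
  have : G.dist a c ≤ G.dist a z + G.dist z c := hG.dist_triangle
  have : G.dist z c ≤ G.dist z b + G.dist b c := hG.dist_triangle
  simp only [itv, Set.mem_ofPred_eq] at *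
  omega

theorem itv_subset_itv_right (hG : G.Connected) {a b c : V} (hb : b ∈ itv G a c) :
    itv G b c ⊆ itv G a c := by
  rw [itv_comm b, itv_comm a]
  exact itv_subset_itv_left hG (itv_comm a c ▸ hb)

theorem mem_itv_of_mem_itv_of_mem_itv (hG : G.Connected) {a b c d : V} (hb : b ∈ itv G a d)
    (hc : c ∈ itv G b d) : b ∈ itv G a c := by
  have : G.dist a c ≤ G.dist a b + G.dist b c := hG.dist_triangle
  have : G.dist a d ≤ G.dist a c + G.dist c d := hG.dist_triangle
  simp only [itv, Set.mem_ofPred_eq] at *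
  omega

theorem eq_of_mem_itv_of_dist_le (hG : G.Connected) {a b m : V} (hm : m ∈ itv G a b)
    (hle : G.dist a b ≤ G.dist a m) : m = b :=
  hG.dist_eq_zero_iff.mp (by simp only [itv, Set.mem_ofPred_eq] at hm; omega)

theorem mem_itv_or_mem_itv_of_adj (hG : IsMedianGraph G) (z : V) {a b : V} (hab : G.Adj a b) :
    a ∈ itv G z b ∨ b ∈ itv G z a := by
  obtain ⟨m, hm₁, hm₂, hm₃⟩ := (hG.2 z a b).exists
  have hab₁ : G.dist a b = 1 := SimpleGraph.dist_eq_one_iff_adj.mpr hab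
  have : G.dist a m = 0 ∨ G.dist m b = 0 := by
    simp only [itv, Set.mem_ofPred_eq] at hm₂; omega
  rcases this with h | h
  · obtain rfl := hG.1.dist_eq_zero_iff.mp h
    exact Or.inl (itv_comm b z ▸ hm₃)
  · obtain rfl := hG.1.dist_eq_zero_iff.mp h
    exact Or.inr hm₁

theorem IsHalfspace.eq_setOf_dist_lt (hG : IsMedianGraph G) {k : Set V} (hk : IsHalfspace G k)
    {a b : V} (hab : G.Adj a b) (ha : a ∈ k) (hb : b ∉ k) :
    k = {z | G.dist z a < G.dist z b} := by
  obtain ⟨-, -, hkc, hkcc⟩ := hk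
  have hab₁ : G.dist a b = 1 := SimpleGraph.dist_eq_one_iff_adj.mpr hab
  ext z
  simp only [Set.mem_ofPred_eq]
  constructor
  · intro hz
    rcases mem_itv_or_mem_itv_of_adj hG z hab with h | h
    · simp only [itv, Set.mem_ofPred_eq] at h; omega
    · exact absurd (hkc z hz a ha h) hb
  · intro hlt
    by_contra hz
    rcases mem_itv_or_mem_itv_of_adj hG z hab with h | h
    · exact hkcc z hz b hb h ha
    · simp only [itv, Set.mem_ofPred_eq] at h
      rw [SimpleGraph.dist_comm (u := b)] at h
      omega

theorem encard_le_dist_of_subset_Hset (hG : IsMedianGraph G) {x y : V} {c : Set (Set V)}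
    (hc : c ⊆ Hset G x y) : c.encard ≤ G.dist x y := by
  classical
  obtain ⟨p, hp⟩ := hG.1.exists_walk_length_eq_dist x y
  have hcut :
      c ⊆ (fun d : G.Dart => {z | G.dist z d.fst < G.dist z d.snd}) '' {d | d ∈ p.darts} := by
    intro k hk
    obtain ⟨hkh, hxk, hyk⟩ := hc hk
    obtain ⟨d, hd, hdk, hdk'⟩ := p.exists_boundary_dart k hxk hyk
    exact ⟨d, hd, (hkh.eq_setOf_dist_lt hG d.adj hdk hdk').symm⟩
  calc c.encard ≤ {d | d ∈ p.darts}.encard :=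
        (Set.encard_le_encard hcut).trans (Set.encard_image_le _ _)
    _ = p.darts.toFinset.card := by rw [← Set.encard_coe_eq_coe_finsetCard]; simp
    _ ≤ G.dist x y := by
      rw [← hp, ← p.length_darts]
      exact_mod_cast p.darts.toFinset_card_le

/-- `dnor` and the condition defining `Hn` are, definitionally, suprema of such sets. -/
def chainCards {α : Type*} (S : Set (Set α)) : Set ℕ :=
  {n | ∃ c : Set (Set α), c ⊆ S ∧ IsChain (· ⊆ ·) c ∧ c.encard = n}

theorem zero_mem_chainCards {α : Type*} (S : Set (Set α)) : 0 ∈ chainCards S :=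
  ⟨∅, Set.empty_subset _, Set.pairwise_empty _, by simp⟩

theorem chainCards_mono {α : Type*} {S T : Set (Set α)} (hST : S ⊆ T) :
    chainCards S ⊆ chainCards T := fun _ ⟨c, hc, hchain, hcard⟩ =>
  ⟨c, hc.trans hST, hchain, hcard⟩

theorem bddAbove_chainCards_Hset (hG : IsMedianGraph G) (x y : V) :
    BddAbove (chainCards (Hset G x y)) := by
  refine ⟨G.dist x y, ?_⟩
  rintro N ⟨c, hc, -, hcard⟩
  exact_mod_cast hcard ▸ encard_le_dist_of_subset_Hset hG hc

theorem le_dnor (hG : IsMedianGraph G) {x y : V} {N : ℕ} (hN : N ∈ chainCards (Hset G x y)) :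
    N ≤ dnor G x y :=
  le_csSup (bddAbove_chainCards_Hset hG x y) hN

theorem Hset_subset_Hset_of_mem_itv {x y w : V} (hw : w ∈ itv G x y) :
    Hset G x w ⊆ Hset G x y := by
  rintro k ⟨hk, hxk, hwk⟩
  exact ⟨hk, hxk, fun hyk => hwk (hk.2.2.1 x hxk y hyk hw)⟩

theorem dnor_le_dnor_of_mem_itv (hG : IsMedianGraph G) {x y w : V} (hw : w ∈ itv G x y) :
    dnor G x w ≤ dnor G x y :=
  csSup_le_csSup (bddAbove_chainCards_Hset hG x y) ⟨0, zero_mem_chainCards _⟩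
    (chainCards_mono (Hset_subset_Hset_of_mem_itv hw))

/-- Otherwise two members of the chain would contain `u` and `w` respectively, and the larger
one would contain `[u, w]`. -/
theorem IsChain.subset_Hset_or_subset_Hset {x z u w : V} {c : Set (Set V)}
    (hchain : IsChain (· ⊆ ·) c) (hc : c ⊆ Hset G x z) (hz : z ∈ itv G u w) :
    c ⊆ Hset G x u ∨ c ⊆ Hset G x w := by
  by_contra! ⟨hu, hw⟩
  obtain ⟨k, hk, hku⟩ := Set.not_subset.mp hu
  obtain ⟨l, hl, hlw⟩ := Set.not_subset.mp hw
  obtain ⟨hkh, hxk, hzk⟩ := hc hk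
  obtain ⟨hlh, hxl, hzl⟩ := hc hl
  have hu : u ∈ k := by by_contra h; exact hku ⟨hkh, hxk, h⟩
  have hw : w ∈ l := by by_contra h; exact hlw ⟨hlh, hxl, h⟩
  rcases hchain.total hk hl with hkl | hlk
  · exact hzl (hlh.2.2.1 u (hkl hu) w hw hz)
  · exact hzk (hkh.2.2.1 u hu w (hlk hw) hz)

theorem chainCards_Hset_subset_union {x z u w : V} (hz : z ∈ itv G u w) :
    chainCards (Hset G x z) ⊆ chainCards (Hset G x u) ∪ chainCards (Hset G x w) := by
  rintro N ⟨c, hc, hchain, hcard⟩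
  rcases hchain.subset_Hset_or_subset_Hset hc hz with h | h
  · exact Or.inl ⟨c, h, hchain, hcard⟩
  · exact Or.inr ⟨c, h, hchain, hcard⟩

theorem dnor_le_max_of_mem_itv (hG : IsMedianGraph G) (x : V) {u w z : V}
    (hz : z ∈ itv G u w) : dnor G x z ≤ max (dnor G x u) (dnor G x w) := by
  refine csSup_le ⟨0, zero_mem_chainCards _⟩ fun N hN => ?_
  rcases chainCards_Hset_subset_union hz hN with h | h
  · exact le_max_of_le_left (le_dnor hG h)
  · exact le_max_of_le_right (le_dnor hG h)

theorem cvx_setOf_dnor_le (hG : IsMedianGraph G) (x : V) (n : ℕ) :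
    Cvx G {w | dnor G x w ≤ n} :=
  fun _ hu _ hw _ hz => (dnor_le_max_of_mem_itv hG x hz).trans (max_le hu hw)

theorem le_dnor_of_mem_Hn_of_notMem (hG : IsMedianGraph G) {x₀ x : V} {n : ℕ} {h : Set V}
    (hh : h ∈ Hn G x₀ x n) {m : V} (hm : m ∉ h) : n ≤ dnor G x₀ m := by
  have hsup : sSup (chainCards {k | k ∈ Hset G x₀ x ∧ k ⊆ h}) = n := hh.2
  have hbdd : BddAbove (chainCards {k | k ∈ Hset G x₀ x ∧ k ⊆ h}) :=
    (bddAbove_chainCards_Hset hG x₀ x).mono (chainCards_mono fun _ hk => hk.1)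
  have hn := hsup ▸ Nat.sSup_mem ⟨0, zero_mem_chainCards _⟩ hbdd
  refine le_dnor hG (chainCards_mono ?_ hn)
  rintro k ⟨⟨hkh, hxk, -⟩, hkh'⟩
  exact ⟨hkh, hxk, fun hmk => hm (hkh' hmk)⟩

theorem inter_subset_itv_of_forall_dist_le (hG : IsMedianGraph G) {B : Set V} (hB : Cvx G B)
    {x₀ x v : V} (hv : v ∈ itv G x₀ x) (hvB : v ∈ B)
    (hmax : ∀ w ∈ itv G x₀ x, w ∈ B → G.dist x₀ w ≤ G.dist x₀ v) :
    itv G x₀ x ∩ B ⊆ itv G x₀ v := by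
  rintro w ⟨hw, hwB⟩
  obtain ⟨m, hwm, hvm, hxm⟩ := (hG.2 w v x).exists
  have hm : m ∈ itv G x₀ x := itv_subset_itv_right hG.1 hv hvm
  have hvm' : v ∈ itv G x₀ m := mem_itv_of_mem_itv_of_mem_itv hG.1 hv hvm
  obtain rfl := eq_of_mem_itv_of_dist_le hG.1 hvm' (hmax m hm (hB w hwB v hvB hwm))
  exact mem_itv_of_mem_itv_of_mem_itv hG.1 hw (itv_comm x w ▸ hxm)

theorem itv_inter_eq_itv_of_forall_dist_le (hG : IsMedianGraph G) {K : Set V} (hK : Cvx G K)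
    {x₀ v xh : V} (hv : v ∈ K) (hxh : xh ∈ itv G x₀ v ∩ K)
    (hmin : ∀ w ∈ itv G x₀ v ∩ K, G.dist x₀ xh ≤ G.dist x₀ w) :
    itv G x₀ v ∩ K = itv G xh v := by
  refine Set.Subset.antisymm ?_ fun z hz =>
    ⟨itv_subset_itv_right hG.1 hxh.1 hz, hK xh hxh.2 v hv hz⟩
  rintro w ⟨hw, hwK⟩
  obtain ⟨m, hxhm, hwm, hx₀m⟩ := (hG.2 x₀ xh w).exists
  have hm : m ∈ itv G x₀ v ∩ K :=
    ⟨itv_subset_itv_left hG.1 hw (itv_comm w x₀ ▸ hx₀m), hK xh hxh.2 w hwK hwm⟩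
  obtain rfl := eq_of_mem_itv_of_dist_le hG.1 hxhm (hmin m hm)
  rw [itv_comm] at hw ⊢
  exact mem_itv_of_mem_itv_of_mem_itv hG.1 hw hx₀m

theorem Fh_eq_itv_inter_compl (hG : IsMedianGraph G) {x₀ x v : V} {n : ℕ} {h : Set V}
    (hv₁ : v ∈ itv G x₀ x) (hv₂ : dnor G x₀ v ≤ n)
    (hv₃ : ∀ w ∈ itv G x₀ x, dnor G x₀ w ≤ n → G.dist x₀ w ≤ G.dist x₀ v)
    (hh : h ∈ Hn G x₀ x n) : Fh G x₀ x n h = itv G x₀ v ∩ hᶜ := by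
  ext w
  constructor
  · rintro ⟨hw, hwn, hwh⟩
    exact ⟨inter_subset_itv_of_forall_dist_le hG (cvx_setOf_dnor_le hG x₀ n) hv₁ hv₂ hv₃
      ⟨hw, hwn.le⟩, hwh⟩
  · rintro ⟨hw, hwh⟩
    have hwn : dnor G x₀ w ≤ n := (dnor_le_dnor_of_mem_itv hG hw).trans hv₂
    exact ⟨itv_subset_itv_left hG.1 hv₁ hw,
      hwn.antisymm (le_dnor_of_mem_Hn_of_notMem hG hh hwh), hwh⟩

end MedianGraph

theorem Fh_eq_interval_general {V : Type*} (G : SimpleGraph V) (hG : IsMedianGraph G)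
    (x₀ x : V) (n : ℕ)
    (v : V) (hv₁ : v ∈ itv G x₀ x) (hv₂ : dnor G x₀ v ≤ n)
    (hv₃ : ∀ w ∈ itv G x₀ x, dnor G x₀ w ≤ n → G.dist x₀ w ≤ G.dist x₀ v)
    (h : Set V) (hh : h ∈ Hn G x₀ x n)
    (xh : V) (hxh : xh ∈ Fh G x₀ x n h)
    (hmin : ∀ w ∈ Fh G x₀ x n h, G.dist x₀ xh ≤ G.dist x₀ w) :
    Fh G x₀ x n h = itv G xh v := by
  have hFh := Fh_eq_itv_inter_compl hG hv₁ hv₂ hv₃ hh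
  obtain ⟨⟨⟨-, -, hhc, hhcc⟩, hx₀h, -⟩, -⟩ := hh
  rw [hFh] at hxh hmin ⊢
  have hvh : v ∉ h := fun hvh => hxh.2 (hhc x₀ hx₀h v hvh hxh.1)
  exact itv_inter_eq_itv_of_forall_dist_le hG hhcc hvh hxh hmin

/-- In a median graph, fix `x₀, x`, an integer `n ≥ 1` with
`d_nor(x₀,x) ≥ n`; let `v` be the point of `[x₀,x] ∩ B_nor(x₀,n)` at maximal distance
from `x₀`, let `h ∈ H_n` with `F_h` nonempty, and let `x_h ∈ F_h` minimize `d(x₀,·)`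
over `F_h`. Then `F_h = [x_h, v]`. -/
theorem Fh_eq_interval {V : Type*} (G : SimpleGraph V) (hG : IsMedianGraph G)
    (x₀ x : V) (n : ℕ) (hn : 1 ≤ n) (hd : n ≤ dnor G x₀ x)
    (v : V) (hv₁ : v ∈ itv G x₀ x) (hv₂ : dnor G x₀ v ≤ n)
    (hv₃ : ∀ w ∈ itv G x₀ x, dnor G x₀ w ≤ n → G.dist x₀ w ≤ G.dist x₀ v)
    (h : Set V) (hh : h ∈ Hn G x₀ x n)
    (xh : V) (hxh : xh ∈ Fh G x₀ x n h)
    (hmin : ∀ w ∈ Fh G x₀ x n h, G.dist x₀ xh ≤ G.dist x₀ w) :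
    Fh G x₀ x n h = itv G xh v :=
  Fh_eq_interval_general G hG x₀ x n v hv₁ hv₂ hv₃ h hh xh hxh hmin
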